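/- arXiv:1209.4559 — 3 statements merged into one kernel-verified Lean document; each statement's English description precedes it below -/
import Mathlib

section
/- Let Γ be an ordered abelian group of finite rank r, regarded as a subgroup of the lexicographic product ℝ^r, so that every monomial is t^α = t_1^{α_1}⋯t_r^{α_r} with α = (α_1,…,α_r), and suppose the coefficient field k contains all the real exponents α_i (e.g. k = ℝ). Then for ANY choice of values d(t_1)/t_1, …, d(t_r)/t_r in k((Γ)), the formulas d(t^α) = t^α(α_1 d(t_1)/t_1 + ⋯ + α_r d(t_r)/t_r) and d(Σ_α a_α t^α) = Σ_α a_α d(t^α) give a well-defined series derivation on k((Γ)): explicitly d(a) = Σ_{i=1}^r (d(t_i)/t_i)·Σ_α (a_α α_i) t^α, and each inner sum is a well-defined element of k((Γ)). -/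
/- Common setting: a generalized series field `k((Γ))`, where the totally ordered abelian
group `Γ` is regarded, via Hahn's embedding theorem, as a subgroup of the Hahn group
`Σ_{φ ∈ Φ} ℝ = HahnSeries Φ ℝ`, and the coefficient field `k` contains the real exponents
(via a ring homomorphism `ι : ℝ →+* k`). -/

open HahnSeries

noncomputable section

/-- Archimedean equivalence on an ordered abelian group. -/
def ArchEquiv {Γ : Type*} [AddCommGroup Γ] [LinearOrder Γ] [IsOrderedAddMonoid Γ] (x y : Γ) : Prop :=
  ∃ n : ℕ, |x| ≤ n • |y| ∧ |y| ≤ n • |x|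

/-- Lexicographic positivity of a (generalized) Hahn series: the leading coefficient is
positive. -/
def LexPos {Φ : Type*} [LinearOrder Φ] {R : Type*} [Zero R] [PartialOrder R]
    (x : HahnSeries Φ R) : Prop :=
  ∃ φ, 0 < x.coeff φ ∧ ∀ ψ, ψ < φ → x.coeff ψ = 0

/-- Lexicographic order relation. -/
def LexLe {Φ : Type*} [LinearOrder Φ] {R : Type*} [AddCommGroup R] [PartialOrder R]
    (x y : HahnSeries Φ R) : Prop :=
  x = y ∨ LexPos (y - x)

/-- The data of Hahn's embedding theorem: `Γ` is (identified with) a subgroup of the Hahn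
group `Σ_{φ ∈ Φ} ℝ` ordered lexicographically, containing the characteristic functions
`1_φ = single φ 1`.  The natural valuation of `γ ∈ Γ` is `(e γ).orderTop`. -/
structure HahnEmbeddingData (Φ : Type*) [LinearOrder Φ]
    (Γ : Type*) [AddCommGroup Γ] [LinearOrder Γ] [IsOrderedAddMonoid Γ] where
  e : Γ →+ HahnSeries Φ ℝ
  inj : Function.Injective e
  ord : ∀ γ : Γ, 0 < γ ↔ LexPos (e γ)
  b : Φ → Γ
  hb : ∀ φ, e (b φ) = HahnSeries.single φ 1

variable {Φ : Type*} [LinearOrder Φ] {Γ : Type*} [AddCommGroup Γ] [LinearOrder Γ] [IsOrderedAddMonoid Γ]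
  {k : Type*} [Field k]

/-- The fundamental monomial `t_φ = t^{1_φ}` in `k((Γ))`. -/
def tmon (H : HahnEmbeddingData Φ Γ) (k : Type*) [Field k] (φ : Φ) : HahnSeries Γ k :=
  HahnSeries.single (H.b φ) 1

/-- The logarithmic derivative `d(t_φ)/t_φ` of the fundamental monomial `t_φ`. -/
def logDer (H : HahnEmbeddingData Φ Γ) (D : HahnSeries Γ k → HahnSeries Γ k) (φ : Φ) :
    HahnSeries Γ k :=
  D (tmon H k φ) * (tmon H k φ)⁻¹

/-- A series derivation on `k((Γ))`: a derivation which is strongly linear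
(`d(Σ a_α t^α) = Σ a_α d(t^α)`, the family being summable) and satisfies the strong
Leibniz rule (`d(t^α) = t^α Σ_φ α_φ d(t_φ)/t_φ`, the family being summable). -/
structure IsSeriesDerivation (H : HahnEmbeddingData Φ Γ) (ι : ℝ →+* k)
    (D : HahnSeries Γ k → HahnSeries Γ k) : Prop where
  map_add : ∀ x y, D (x + y) = D x + D y
  leibniz : ∀ x y, D (x * y) = D x * y + x * D y
  strong_linear : ∀ x : HahnSeries Γ k, ∃ s : SummableFamily Γ k Γ,
    (∀ γ, s γ = x.coeff γ • D (HahnSeries.single γ 1)) ∧ D x = s.hsum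
  strong_leibniz : ∀ γ : Γ, ∃ s : SummableFamily Γ k Φ,
    (∀ φ, s φ = ι ((H.e γ).coeff φ) • (HahnSeries.single γ 1 * logDer H D φ)) ∧
    D (HahnSeries.single γ 1) = s.hsum

/-- (HD1): the valuation ring is `ker d + m_v`. -/
def HDone (D : HahnSeries Γ k → HahnSeries Γ k) : Prop :=
  {x : HahnSeries Γ k | 0 ≤ x.orderTop} =
    {x : HahnSeries Γ k | ∃ c m, D c = 0 ∧ 0 < HahnSeries.orderTop m ∧ x = c + m}

/-- (HD2): l'Hospital's rule. -/
def HDtwo (D : HahnSeries Γ k → HahnSeries Γ k) : Prop :=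
  ∀ a b : HahnSeries Γ k, a ≠ 0 → b ≠ 0 → a.order ≠ 0 → b.order ≠ 0 →
    (a.orderTop ≤ b.orderTop ↔ (D a).orderTop ≤ (D b).orderTop)

/-- (HD3): compatibility of the logarithmic derivative with the valuation. -/
def HDthree (D : HahnSeries Γ k → HahnSeries Γ k) : Prop :=
  ∀ a b : HahnSeries Γ k, a ≠ 0 → b ≠ 0 → |b.order| < |a.order| → 0 < |b.order| →
    (D a * a⁻¹).orderTop ≤ (D b * b⁻¹).orderTop ∧
      ((D a * a⁻¹).orderTop = (D b * b⁻¹).orderTop ↔ ArchEquiv a.order b.order)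

/-- A series derivation of Hardy type on `k((Γ))`. -/
def IsHardySeriesDerivation (H : HahnEmbeddingData Φ Γ) (ι : ℝ →+* k)
    (D : HahnSeries Γ k → HahnSeries Γ k) : Prop :=
  IsSeriesDerivation H ι D ∧ HDone D ∧ HDtwo D ∧ HDthree D

end

/-! Every additive character `c : Γ →+ k` gives an Euler-type derivation
`Σ a_γ t^γ ↦ Σ a_γ c(γ) t^γ` of `k((Γ))`: the Leibniz rule holds because `c` is additive on
the pairs `α + β = γ` of the convolution, and strong linearity holds because it acts monomial by
monomial. Take `d = Σ_i u_i ∂_i`, where `∂_i` is the Euler derivation of the `i`-th exponent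
coordinate `γ ↦ ι γ_i`. The monomial `t_j` has exponent coordinates `δ_ij`, so `d t_j / t_j = u_j`,
and the strong Leibniz rule is the identity `d(t^γ) = t^γ Σ_i γ_i u_i`. -/

noncomputable section

theorem Derivation.coe_finset_sum {R A M ι : Type*} [CommSemiring R] [CommSemiring A]
    [AddCommMonoid M] [Algebra R A] [Module A M] [Module R M] (s : Finset ι)
    (D : ι → Derivation R A M) : ⇑(∑ i ∈ s, D i) = ∑ i ∈ s, ⇑(D i) :=
  map_sum Derivation.coeFnAddMonoidHom D s

namespace HahnSeries

theorem SummableFamily.exists_coe_eq_of_fintype {Γ R α : Type*} [PartialOrder Γ]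
    [AddCommMonoid R] [Fintype α] (f : α → R⟦Γ⟧) :
    ∃ s : SummableFamily Γ R α, ⇑s = f ∧ s.hsum = ∑ a, f a :=
  ⟨.ofFinsupp (Finsupp.equivFunOnFinite.symm f), rfl, by
    rw [SummableFamily.hsum_ofFinsupp, Finsupp.sum_fintype _ _ fun _ => rfl]; rfl⟩

theorem smul_single {Γ R : Type*} [PartialOrder Γ] [Semiring R] (g : Γ) (r s : R) :
    r • single g s = single g (r * s) := by
  ext h
  by_cases hh : h = g <;> simp [hh]

section Monomials

variable {Γ R : Type*} [PartialOrder Γ] [AddCommMonoid R]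

def monomialFamily (x : HahnSeries Γ R) : SummableFamily Γ R Γ where
  toFun g := single g (x.coeff g)
  isPWO_iUnion_support' := x.isPWO_support.mono <| Set.iUnion_subset fun g h hh => by
    by_cases hhg : h = g <;> simp_all
  finite_co_support' h := (Set.finite_singleton h).subset fun g hg => by
    by_contra hne
    simp_all [Ne.symm hne]

@[simp]
theorem monomialFamily_apply (x : HahnSeries Γ R) (g : Γ) :
    monomialFamily x g = single g (x.coeff g) := rfl

@[simp]
theorem hsum_monomialFamily (x : HahnSeries Γ R) : (monomialFamily x).hsum = x := by
  ext g
  rw [SummableFamily.coeff_hsum, finsum_eq_single _ g fun h hh => by simp [Ne.symm hh]]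
  simp

end Monomials

section StronglyLinear

variable {Γ R : Type*} [PartialOrder Γ] [Semiring R]

def IsStronglyLinear (D : R⟦Γ⟧ → R⟦Γ⟧) : Prop :=
  ∀ x : R⟦Γ⟧, ∃ s : SummableFamily Γ R Γ,
    (∀ g, s g = x.coeff g • D (single g 1)) ∧ D x = s.hsum

theorem isStronglyLinear_zero : IsStronglyLinear (0 : R⟦Γ⟧ → R⟦Γ⟧) :=
  fun _ => ⟨0, fun _ => by simp, by simp⟩

theorem IsStronglyLinear.add {D E : R⟦Γ⟧ → R⟦Γ⟧} (hD : IsStronglyLinear D)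
    (hE : IsStronglyLinear E) : IsStronglyLinear (D + E) := fun x => by
  obtain ⟨s, hs, hDx⟩ := hD x
  obtain ⟨t, ht, hEx⟩ := hE x
  exact ⟨s + t, fun g => by simp [hs, ht, smul_add], by simp [hDx, hEx, SummableFamily.hsum_add]⟩

theorem isStronglyLinear_sum {ι : Type*} (s : Finset ι) {D : ι → R⟦Γ⟧ → R⟦Γ⟧}
    (hD : ∀ i ∈ s, IsStronglyLinear (D i)) : IsStronglyLinear (∑ i ∈ s, D i) :=
  Finset.sum_induction _ _ (fun _ _ => .add) isStronglyLinear_zero hD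

end StronglyLinear

section EulerDerivation

variable {Γ R : Type*} [AddCommMonoid Γ] [PartialOrder Γ] [IsOrderedCancelAddMonoid Γ]
  [CommSemiring R]

def eulerDerivation (c : Γ →+ R) : Derivation R R⟦Γ⟧ R⟦Γ⟧ where
  toFun x :=
    { coeff g := x.coeff g * c g
      isPWO_support' := x.isPWO_support'.mono (Function.support_mul_subset_left _ _) }
  map_add' x y := by ext; simp [add_mul]
  map_smul' r x := by ext; simp [mul_assoc]
  map_one_eq_zero' := by ext g; by_cases hg : g = 0 <;> simp [coeff_one, hg]
  leibniz' x y := by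
    ext g
    dsimp only [LinearMap.coe_mk, AddHom.coe_mk]
    rw [smul_eq_mul, smul_eq_mul, mul_comm y, coeff_add, coeff_mul, Finset.sum_mul,
      coeff_mul_right' y.isPWO_support ?_, coeff_mul_left' x.isPWO_support ?_,
      ← Finset.sum_add_distrib]
    · refine Finset.sum_congr rfl fun ij hij => ?_
      rw [← (Finset.mem_antidiagonal.1 hij).2.2, map_add]
      ring
    all_goals exact fun _ hg => left_ne_zero_of_mul hg

@[simp]
theorem coeff_eulerDerivation (c : Γ →+ R) (x : R⟦Γ⟧) (g : Γ) :
    (eulerDerivation c x).coeff g = x.coeff g * c g := rfl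

theorem eulerDerivation_single (c : Γ →+ R) (g : Γ) (r : R) :
    eulerDerivation c (single g r) = single g (r * c g) := by
  ext h
  by_cases hh : h = g <;> simp [hh]

theorem IsStronglyLinear.smul {D : R⟦Γ⟧ → R⟦Γ⟧} (hD : IsStronglyLinear D) (u : R⟦Γ⟧) :
    IsStronglyLinear (u • D) := fun x => by
  obtain ⟨s, hs, hDx⟩ := hD x
  refine ⟨u • s, fun g => ?_, by
    rw [Pi.smul_apply, hDx, SummableFamily.hsum_smul, smul_eq_mul]⟩
  rw [SummableFamily.smul_apply, of_symm_smul_of_eq_mul, hs, Pi.smul_apply, smul_eq_mul,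
    mul_smul_comm]

theorem isStronglyLinear_eulerDerivation (c : Γ →+ R) :
    IsStronglyLinear (eulerDerivation c) := fun x =>
  ⟨monomialFamily (eulerDerivation c x), fun g => by
    rw [monomialFamily_apply, eulerDerivation_single, coeff_eulerDerivation, one_mul,
      smul_single], (hsum_monomialFamily _).symm⟩

end EulerDerivation

section FiniteSum

variable {Γ R ι : Type*} [AddCommMonoid Γ] [PartialOrder Γ] [IsOrderedCancelAddMonoid Γ]
  [CommSemiring R] [Fintype ι] (u : ι → R⟦Γ⟧) (c : ι → Γ →+ R)

theorem isStronglyLinear_sum_smul_eulerDerivation :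
    IsStronglyLinear ⇑(∑ i, u i • eulerDerivation (c i)) := by
  rw [Derivation.coe_finset_sum]
  exact isStronglyLinear_sum _ fun i _ => (isStronglyLinear_eulerDerivation (c i)).smul (u i)

theorem sum_smul_eulerDerivation_apply (x : R⟦Γ⟧) :
    (∑ i, u i • eulerDerivation (c i)) x = ∑ i, u i * eulerDerivation (c i) x := by
  simp [Derivation.coe_finset_sum]

theorem sum_smul_eulerDerivation_single (g : Γ) :
    (∑ i, u i • eulerDerivation (c i)) (single g 1) = single g 1 * ∑ i, c i g • u i := by
  simp only [sum_smul_eulerDerivation_apply, eulerDerivation_single, Finset.mul_sum]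
  refine Finset.sum_congr rfl fun i _ => ?_
  rw [mul_smul_comm, ← smul_mul_assoc, smul_single, mul_one, one_mul, mul_comm]

end FiniteSum

end HahnSeries

namespace HahnEmbeddingData

variable {Φ Γ k : Type*} [LinearOrder Φ] [AddCommGroup Γ] [LinearOrder Γ] [IsOrderedAddMonoid Γ]
  [Field k] (H : HahnEmbeddingData Φ Γ) (ι : ℝ →+* k)

def exponent (φ : Φ) : Γ →+ k :=
  ι.toAddMonoidHom.comp ((coeff.addMonoidHom φ).comp H.e)

@[simp]
theorem exponent_apply (φ : Φ) (γ : Γ) : H.exponent ι φ γ = ι ((H.e γ).coeff φ) := rfl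

open scoped Classical in
theorem exponent_b (φ ψ : Φ) : H.exponent ι φ (H.b ψ) = if φ = ψ then 1 else 0 := by
  rw [exponent_apply, H.hb, coeff_single]
  split_ifs <;> simp

end HahnEmbeddingData

end

/-- in the finite rank case (`Φ = Fin r`), for ANY choice of the logarithmic
derivatives `u i = d(t_i)/t_i` in `k((Γ))`, the strong Leibniz rule and strong linearity
give a well-defined series derivation, explicitly
`d(a) = Σ_{i<r} (d(t_i)/t_i) · Σ_α (a_α α_i) t^α`, each inner sum being a well-defined
element of `k((Γ))` (a summable family). -/
theorem finite_rank_series_derivation {r : ℕ} {Γ : Type*} [AddCommGroup Γ] [LinearOrder Γ] [IsOrderedAddMonoid Γ]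
    {k : Type*} [Field k] (H : HahnEmbeddingData (Fin r) Γ) (ι : ℝ →+* k)
    (u : Fin r → HahnSeries Γ k) :
    ∃ D : HahnSeries Γ k → HahnSeries Γ k,
      IsSeriesDerivation H ι D ∧
      (∀ i : Fin r, D (tmon H k i) = tmon H k i * u i) ∧
      (∀ a : HahnSeries Γ k, ∃ s : Fin r → HahnSeries.SummableFamily Γ k Γ,
        (∀ i γ, s i γ = (a.coeff γ * ι ((H.e γ).coeff i)) • HahnSeries.single γ 1) ∧
        D a = ∑ i : Fin r, u i * (s i).hsum) := by
  set D := ∑ i, u i • eulerDerivation (H.exponent ι i)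
  have hD_single (γ : Γ) : D (single γ 1) = single γ 1 * ∑ i, H.exponent ι i γ • u i :=
    sum_smul_eulerDerivation_single u _ γ
  have hD_tmon (i : Fin r) : D (tmon H k i) = tmon H k i * u i := by
    classical
    simp [tmon, hD_single, H.exponent_b, ite_smul]
  have hlogDer (i : Fin r) : logDer H D i = u i := by
    rw [logDer, hD_tmon, mul_right_comm, mul_inv_cancel₀ (single_ne_zero one_ne_zero), one_mul]
  refine ⟨D, ⟨map_add D, fun x y => ?_, isStronglyLinear_sum_smul_eulerDerivation u _,
    fun γ => ?_⟩, hD_tmon, fun a => ?_⟩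
  · rw [D.leibniz, smul_eq_mul, smul_eq_mul, add_comm, mul_comm y]
  · obtain ⟨s, hs, hsum⟩ := SummableFamily.exists_coe_eq_of_fintype
      fun i => ι ((H.e γ).coeff i) • (single γ 1 * logDer H D i)
    refine ⟨s, congrFun hs, ?_⟩
    simp only [hsum, hlogDer, hD_single, Finset.mul_sum, mul_smul_comm, H.exponent_apply]
  · refine ⟨fun i => monomialFamily (eulerDerivation (H.exponent ι i) a), fun i γ => ?_, ?_⟩
    · rw [monomialFamily_apply, coeff_eulerDerivation, smul_single, mul_one, H.exponent_apply]
    · simp only [hsum_monomialFamily, D, sum_smul_eulerDerivation_apply]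
end

section
/- Let d be a series derivation on k((Γ)), where Γ is a subgroup of the Hahn group Σ_{φ∈Φ} ℝ, and set θ_φ := v(d(t_φ)/t_φ) for each φ ∈ Φ. Then d satisfies l'Hospital's rule (HD2) and the compatibility of the logarithmic derivative with the valuation (HD3) if and only if the following condition (H3) holds: for all φ₁, φ₂ ∈ Φ with φ₁ < φ₂, one has θ_{φ₁} < θ_{φ₂} and v_Γ(θ_{φ₁} − θ_{φ₂}) > φ₁. In that case (HD1) also holds with ker d = k, so d is a Hardy type derivation. -/
/- Common setting: a generalized series field `k((Γ))`, where the totally ordered abelian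
group `Γ` is regarded, via Hahn's embedding theorem, as a subgroup of the Hahn group
`Σ_{φ ∈ Φ} ℝ = HahnSeries Φ ℝ`, and the coefficient field `k` contains the real exponents
(via a ring homomorphism `ι : ℝ →+* k`). -/

open HahnSeries

/-!
Under (H3) the map `μ γ = γ + θ (v_Γ γ)` is strictly increasing on `Γ \ {0}`: when
`v_Γ γ' < v_Γ γ`, the second half of (H3) makes `θ (v_Γ γ') - θ (v_Γ γ)` negligible against
`γ' - γ`. By strong linearity and the strong Leibniz rule, the leading monomial of `a` then
dominates `d a`, so `v (d a) = μ (v a)` whenever `v a ≠ 0`. This is (HD2); it gives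
`v (d a / a) = θ (v_Γ (v a))`, hence (HD3), because `v_Γ` is the Archimedean class of `Γ`; and it
shows that `d` kills no series with a non-constant part, whence `ker d = k` and (HD1).

Conversely, (HD3) for `t_{φ₁}` and `t_{φ₂}` forces `θ` to be strictly increasing, and if
`v_Γ (θ_{φ₂} - θ_{φ₁}) ≤ φ₁` then (HD2) for `t_{φ₂}` and `t^{θ_{φ₂} - θ_{φ₁}}` would give
`1_{φ₂} ≤ 0`.
-/

namespace HahnSeries

theorem orderTop_sub_single_zero_pos {Γ R : Type*} [LinearOrder Γ] [Zero Γ] [AddGroup R]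
    {x : HahnSeries Γ R} (hx : 0 ≤ x.orderTop) : 0 < (x - single 0 (x.coeff 0)).orderTop := by
  have hcoeff : ∀ j ≤ (0 : Γ), (x - single 0 (x.coeff 0)).coeff j = 0 := by
    intro j hj
    rcases hj.lt_or_eq with hj | rfl
    · rw [coeff_sub, coeff_eq_zero_of_lt_orderTop (hx.trans_lt' (WithTop.coe_lt_coe.2 hj)),
        coeff_single_of_ne hj.ne, sub_zero]
    · simp
  by_contra h
  rw [not_lt] at h
  obtain ⟨g, hg⟩ := WithTop.ne_top_iff_exists.1 (ne_top_of_le_ne_top WithTop.coe_ne_top h)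
  exact coeff_orderTop_ne hg.symm (hcoeff g (WithTop.coe_le_coe.1 (hg ▸ h)))

theorem orderTop_smul_of_ne_zero {Γ K V : Type*} [LinearOrder Γ] [DivisionRing K]
    [AddCommGroup V] [Module K V] {c : K} (hc : c ≠ 0) (x : HahnSeries Γ V) :
    (c • x).orderTop = x.orderTop :=
  le_antisymm (by simpa [smul_smul, hc] using orderTop_le_orderTop_smul c⁻¹ (c • x))
    (orderTop_le_orderTop_smul c x)

theorem order_inv {Γ k : Type*} [LinearOrder Γ] [AddCommGroup Γ] [IsOrderedAddMonoid Γ]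
    [Field k] {x : HahnSeries Γ k} (hx : x ≠ 0) : x⁻¹.order = -x.order := by
  have h := order_mul hx (inv_ne_zero hx)
  rw [mul_inv_cancel₀ hx, order_one] at h
  exact eq_neg_of_add_eq_zero_right h.symm

theorem SummableFamily.orderTop_hsum_of_lt {Γ R α : Type*} [LinearOrder Γ] [AddCommMonoid R]
    {s : SummableFamily Γ R α} {a : α} {g : Γ} (ha : (s a).orderTop = g)
    (hlt : ∀ b ≠ a, (g : WithTop Γ) < (s b).orderTop) : s.hsum.orderTop = g :=
  hsum_orderTop_of_le ha.symm
    (fun b _ hg' => by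
      rcases eq_or_ne b a with rfl | hb
      · exact WithTop.coe_le_coe.1 (ha ▸ orderTop_le_of_coeff_ne_zero hg')
      · exact WithTop.coe_le_coe.1 ((hlt b hb).le.trans (orderTop_le_of_coeff_ne_zero hg')))
    fun b hb => coeff_eq_zero_of_lt_orderTop (hlt b hb)

end HahnSeries

theorem lexPos_iff_pos_toLex {Φ R : Type*} [LinearOrder Φ] [Zero R] [PartialOrder R]
    {x : HahnSeries Φ R} : LexPos x ↔ 0 < toLex x := by
  rw [HahnSeries.lt_iff]
  simp only [ofLex_toLex, ofLex_zero, coeff_zero, eq_comm (a := (0 : R))]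
  exact exists_congr fun _ => and_comm

theorem archEquiv_iff_mk_eq {M : Type*} [AddCommGroup M] [LinearOrder M] [IsOrderedAddMonoid M]
    {x y : M} : ArchEquiv x y ↔ ArchimedeanClass.mk x = ArchimedeanClass.mk y := by
  rw [ArchimedeanClass.mk_eq_mk]
  constructor
  · rintro ⟨n, hxy, hyx⟩
    exact ⟨⟨n, hyx⟩, ⟨n, hxy⟩⟩
  · rintro ⟨⟨m, hm⟩, ⟨n, hn⟩⟩
    exact ⟨max m n, hn.trans (nsmul_le_nsmul_left (abs_nonneg y) (le_max_right m n)),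
      hm.trans (nsmul_le_nsmul_left (abs_nonneg x) (le_max_left m n))⟩

theorem ArchimedeanClass.mk_map_le_mk_map_iff {M N : Type*} [AddCommGroup M] [LinearOrder M]
    [IsOrderedAddMonoid M] [AddCommGroup N] [LinearOrder N] [IsOrderedAddMonoid N]
    {f : M →+o N} (hf : Function.Injective f) {a b : M} :
    mk (f a) ≤ mk (f b) ↔ mk a ≤ mk b := by
  simp_rw [mk_le_mk, ← map_abs, ← map_nsmul]
  exact exists_congr fun _ => ((OrderHomClass.monotone f).strictMono_of_injective hf).le_iff_le

namespace HahnEmbeddingData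

variable {Φ : Type*} [LinearOrder Φ] {Γ : Type*} [AddCommGroup Γ] [LinearOrder Γ]
  [IsOrderedAddMonoid Γ] (H : HahnEmbeddingData Φ Γ)

theorem pos_iff {γ : Γ} : 0 < γ ↔ 0 < toLex (H.e γ) :=
  (H.ord γ).trans lexPos_iff_pos_toLex

def toLexHom : Γ →+o Lex (HahnSeries Φ ℝ) where
  toFun γ := toLex (H.e γ)
  map_zero' := by simp
  map_add' _ _ := by simp
  monotone' γ γ' h := by
    rw [← sub_nonneg, ← toLex_sub, ← map_sub]
    rcases (sub_nonneg.2 h).eq_or_lt with h0 | hpos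
    · rw [← h0, map_zero, toLex_zero]
    · exact ((H.pos_iff).1 hpos).le

@[simp]
theorem toLexHom_apply (γ : Γ) : H.toLexHom γ = toLex (H.e γ) :=
  rfl

theorem toLexHom_injective : Function.Injective H.toLexHom :=
  H.inj

theorem mk_le_mk_iff_orderTop_le {x y : Γ} :
    ArchimedeanClass.mk x ≤ ArchimedeanClass.mk y ↔ (H.e x).orderTop ≤ (H.e y).orderTop := by
  rw [← ArchimedeanClass.mk_map_le_mk_map_iff H.toLexHom_injective,
    HahnSeries.archimedeanClassMk_le_archimedeanClassMk_iff]
  simp only [toLexHom_apply, ofLex_toLex]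
  refine ⟨fun h => h.elim le_of_lt fun h => h.1.le,
    fun h => h.lt_or_eq.imp_right fun heq => ⟨heq, ?_⟩⟩
  rcases eq_or_ne (H.e y) 0 with hy | hy
  · simp [hy]
  have hx : H.e x ≠ 0 := by rwa [← orderTop_ne_top, heq, orderTop_ne_top]
  -- nonzero leading coefficients lie in `ℝ`, which is Archimedean
  exact (ArchimedeanClass.mk_eq_mk_of_archimedean (leadingCoeff_ne_zero.2 hx)
    (leadingCoeff_ne_zero.2 hy)).le

theorem archEquiv_iff_orderTop_eq {x y : Γ} :
    ArchEquiv x y ↔ (H.e x).orderTop = (H.e y).orderTop := by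
  rw [archEquiv_iff_mk_eq, le_antisymm_iff, le_antisymm_iff, H.mk_le_mk_iff_orderTop_le,
    H.mk_le_mk_iff_orderTop_le]

theorem orderTop_le_orderTop_of_abs_le {x y : Γ} (h : |y| ≤ |x|) :
    (H.e x).orderTop ≤ (H.e y).orderTop :=
  H.mk_le_mk_iff_orderTop_le.1 (ArchimedeanClass.mk_le_mk_of_abs h)

theorem add_pos_of_orderTop_lt {γ δ : Γ} (hγ : 0 < γ)
    (h : (H.e γ).orderTop < (H.e δ).orderTop) : 0 < γ + δ := by
  have hmk : ArchimedeanClass.mk γ < ArchimedeanClass.mk (-δ) := by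
    rw [ArchimedeanClass.mk_neg, lt_iff_not_ge, H.mk_le_mk_iff_orderTop_le]
    exact h.not_ge
  rw [← sub_neg_eq_add, sub_pos]
  exact ArchimedeanClass.lt_of_mk_lt_mk_of_nonneg hmk hγ.le

theorem exists_orderTop_e_eq {γ : Γ} (hγ : γ ≠ 0) : ∃ ψ : Φ, (H.e γ).orderTop = ψ := by
  obtain ⟨ψ, hψ⟩ :=
    WithTop.ne_top_iff_exists.1 (orderTop_ne_top.2 ((map_ne_zero_iff H.e H.inj).2 hγ))
  exact ⟨ψ, hψ.symm⟩

theorem orderTop_e_b (φ : Φ) : (H.e (H.b φ)).orderTop = φ := by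
  rw [H.hb, orderTop_single one_ne_zero]

theorem b_pos (φ : Φ) : 0 < H.b φ := by
  rw [H.pos_iff, H.hb, ← leadingCoeff_pos_iff, ofLex_toLex, leadingCoeff_of_single]
  exact one_pos

theorem b_lt_b_of_lt {φ₁ φ₂ : Φ} (h : φ₁ < φ₂) : H.b φ₂ < H.b φ₁ := by
  have := H.add_pos_of_orderTop_lt (H.b_pos φ₁) (δ := -H.b φ₂)
    (by rw [map_neg, orderTop_neg, H.orderTop_e_b, H.orderTop_e_b]; exact_mod_cast h)
  rwa [← sub_eq_add_neg, sub_pos] at this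

def HThree (θ : Φ → Γ) : Prop :=
  ∀ φ₁ φ₂ : Φ, φ₁ < φ₂ → θ φ₁ < θ φ₂ ∧ (φ₁ : WithTop Φ) < (H.e (θ φ₁ - θ φ₂)).orderTop

variable {H} {θ : Φ → Γ}

theorem HThree.strictMono (h3 : H.HThree θ) : StrictMono θ :=
  fun _ _ h => (h3 _ _ h).1

theorem HThree.add_lt_add_of_lt (h3 : H.HThree θ) {γ γ' : Γ} {ψ ψ' : Φ}
    (hψ : (H.e γ).orderTop = ψ) (hψ' : (H.e γ').orderTop = ψ') (h : γ < γ') :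
    γ + θ ψ < γ' + θ ψ' := by
  rcases lt_trichotomy ψ ψ' with hlt | rfl | hgt
  · exact add_lt_add h (h3.strictMono hlt)
  · exact add_lt_add_left h _
  · have hsub : (H.e (γ' - γ)).orderTop = ψ' := by
      rw [map_sub, orderTop_sub (by rw [hψ, hψ']; exact_mod_cast hgt), hψ']
    have := H.add_pos_of_orderTop_lt (sub_pos.2 h) (δ := θ ψ' - θ ψ)
      (by rw [hsub]; exact (h3 _ _ hgt).2)
    rw [← sub_pos]
    convert this using 1
    abel

theorem HThree.add_le_add_iff (h3 : H.HThree θ) {γ γ' : Γ} {ψ ψ' : Φ}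
    (hψ : (H.e γ).orderTop = ψ) (hψ' : (H.e γ').orderTop = ψ') :
    γ ≤ γ' ↔ γ + θ ψ ≤ γ' + θ ψ' := by
  refine ⟨fun h => h.lt_or_eq.elim (fun h => (h3.add_lt_add_of_lt hψ hψ' h).le) fun h => ?_,
    fun h => not_lt.1 fun hlt => h.not_gt (h3.add_lt_add_of_lt hψ' hψ hlt)⟩
  subst h
  rw [WithTop.coe_inj.1 (hψ.symm.trans hψ')]

end HahnEmbeddingData

namespace IsSeriesDerivation

variable {Φ : Type*} [LinearOrder Φ] {Γ : Type*} [AddCommGroup Γ] [LinearOrder Γ]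
  [IsOrderedAddMonoid Γ] {k : Type*} [Field k] {H : HahnEmbeddingData Φ Γ} {ι : ℝ →+* k}
  {D : HahnSeries Γ k → HahnSeries Γ k} {θ : Φ → Γ}

theorem map_sub (hD : IsSeriesDerivation H ι D) (x y : HahnSeries Γ k) :
    D (x - y) = D x - D y :=
  (AddMonoidHom.mk' D hD.map_add).map_sub x y

theorem map_one (hD : IsSeriesDerivation H ι D) : D 1 = 0 := by
  simpa using hD.leibniz 1 1

theorem map_single (hD : IsSeriesDerivation H ι D) (γ : Γ) (c : k) :
    D (single γ c) = c • D (single γ 1) := by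
  obtain ⟨s, hs, hsum⟩ := hD.strong_linear (single γ c)
  ext g
  rw [hsum, SummableFamily.coeff_hsum, finsum_eq_single _ γ fun γ' hγ' => by
    rw [hs, coeff_single_of_ne hγ', zero_smul, coeff_zero], hs, coeff_single_same]

theorem map_single_zero (hD : IsSeriesDerivation H ι D) (c : k) : D (single 0 c) = 0 := by
  rw [hD.map_single, single_zero_one, hD.map_one, smul_zero]

theorem orderTop_map_single (hD : IsSeriesDerivation H ι D)
    (hθ : ∀ φ, (logDer H D φ).orderTop = θ φ) (hmono : StrictMono θ) {γ : Γ} {ψ : Φ}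
    (hψ : (H.e γ).orderTop = ψ) : (D (single γ 1)).orderTop = ↑(γ + θ ψ) := by
  obtain ⟨s, hs, hsum⟩ := hD.strong_leibniz γ
  have hterm : ∀ φ, (H.e γ).coeff φ ≠ 0 → (s φ).orderTop = ↑(γ + θ φ) := fun φ hc => by
    rw [hs, orderTop_smul_of_ne_zero ((map_ne_zero ι).2 hc), orderTop_mul,
      orderTop_single one_ne_zero, hθ, WithTop.coe_add]
  rw [hsum]
  refine SummableFamily.orderTop_hsum_of_lt (hterm ψ (coeff_orderTop_ne hψ)) fun φ hφ => ?_
  by_cases hc : (H.e γ).coeff φ = 0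
  · rw [hs, hc, map_zero, zero_smul, orderTop_zero]
    exact WithTop.coe_lt_top _
  · have hψφ : ψ < φ := (WithTop.coe_le_coe.1 (hψ ▸ orderTop_le_of_coeff_ne_zero hc)).lt_of_ne' hφ
    rw [hterm φ hc, WithTop.coe_lt_coe]
    exact (add_lt_add_iff_left γ).2 (hmono hψφ)

theorem orderTop_map (hD : IsSeriesDerivation H ι D)
    (hθ : ∀ φ, (logDer H D φ).orderTop = θ φ) (h3 : H.HThree θ) {a : HahnSeries Γ k} {ψ : Φ}
    (ha : a.order ≠ 0) (hψ : (H.e a.order).orderTop = ψ) :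
    (D a).orderTop = ↑(a.order + θ ψ) := by
  obtain ⟨s, hs, hsum⟩ := hD.strong_linear a
  have ha0 : a ≠ 0 := by rintro rfl; exact ha order_zero
  rw [hsum]
  refine SummableFamily.orderTop_hsum_of_lt (a := a.order) ?_ fun γ hγ => ?_
  · rw [hs, orderTop_smul_of_ne_zero (coeff_order_eq_zero.not.2 ha0),
      hD.orderTop_map_single hθ h3.strictMono hψ]
  by_cases hc : a.coeff γ = 0
  · rw [hs, hc, zero_smul, orderTop_zero]
    exact WithTop.coe_lt_top _
  rcases eq_or_ne γ 0 with rfl | hγ0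
  · rw [hs, hD.map_single_zero, smul_zero, orderTop_zero]
    exact WithTop.coe_lt_top _
  obtain ⟨ψ', hψ'⟩ := H.exists_orderTop_e_eq hγ0
  rw [hs, orderTop_smul_of_ne_zero hc, hD.orderTop_map_single hθ h3.strictMono hψ',
    WithTop.coe_lt_coe]
  exact h3.add_lt_add_of_lt hψ hψ' ((order_le_of_coeff_ne_zero hc).lt_of_ne' hγ)

theorem orderTop_map_mul_inv (hD : IsSeriesDerivation H ι D)
    (hθ : ∀ φ, (logDer H D φ).orderTop = θ φ) (h3 : H.HThree θ) {a : HahnSeries Γ k} {ψ : Φ}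
    (ha : a.order ≠ 0) (hψ : (H.e a.order).orderTop = ψ) : (D a * a⁻¹).orderTop = θ ψ := by
  have ha0 : a ≠ 0 := by rintro rfl; exact ha order_zero
  rw [orderTop_mul, hD.orderTop_map hθ h3 ha hψ,
    ← order_eq_orderTop_of_ne_zero (inv_ne_zero ha0), order_inv ha0, ← WithTop.coe_add,
    add_neg_cancel_comm]

theorem hdtwo_of_hThree (hD : IsSeriesDerivation H ι D)
    (hθ : ∀ φ, (logDer H D φ).orderTop = θ φ) (h3 : H.HThree θ) : HDtwo D := by
  intro a b ha hb hao hbo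
  obtain ⟨ψa, hψa⟩ := H.exists_orderTop_e_eq hao
  obtain ⟨ψb, hψb⟩ := H.exists_orderTop_e_eq hbo
  rw [hD.orderTop_map hθ h3 hao hψa, hD.orderTop_map hθ h3 hbo hψb,
    ← order_eq_orderTop_of_ne_zero ha, ← order_eq_orderTop_of_ne_zero hb, WithTop.coe_le_coe,
    WithTop.coe_le_coe]
  exact h3.add_le_add_iff hψa hψb

theorem hdthree_of_hThree (hD : IsSeriesDerivation H ι D)
    (hθ : ∀ φ, (logDer H D φ).orderTop = θ φ) (h3 : H.HThree θ) : HDthree D := by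
  intro a b _ _ hlt hpos
  have hbo : b.order ≠ 0 := abs_pos.1 hpos
  have hao : a.order ≠ 0 := abs_pos.1 (hpos.trans hlt)
  obtain ⟨ψa, hψa⟩ := H.exists_orderTop_e_eq hao
  obtain ⟨ψb, hψb⟩ := H.exists_orderTop_e_eq hbo
  have hle : ψa ≤ ψb :=
    WithTop.coe_le_coe.1 (hψa ▸ hψb ▸ H.orderTop_le_orderTop_of_abs_le hlt.le)
  rw [hD.orderTop_map_mul_inv hθ h3 hao hψa, hD.orderTop_map_mul_inv hθ h3 hbo hψb,
    H.archEquiv_iff_orderTop_eq, hψa, hψb, WithTop.coe_le_coe, WithTop.coe_inj, WithTop.coe_inj,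
    h3.strictMono.injective.eq_iff]
  exact ⟨h3.strictMono.monotone hle, Iff.rfl⟩

theorem map_eq_zero_iff (hD : IsSeriesDerivation H ι D)
    (hθ : ∀ φ, (logDer H D φ).orderTop = θ φ) (h3 : H.HThree θ) {x : HahnSeries Γ k} :
    D x = 0 ↔ ∃ c : k, x = C c := by
  refine ⟨fun hx => ⟨x.coeff 0, ?_⟩, by rintro ⟨c, rfl⟩; exact hD.map_single_zero c⟩
  by_contra hne
  set y := x - C (x.coeff 0)
  have hy : y ≠ 0 := sub_ne_zero.2 hne
  have hyo : y.order ≠ 0 := fun h => coeff_order_eq_zero.not.2 hy (by rw [h]; simp [y])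
  obtain ⟨ψ, hψ⟩ := H.exists_orderTop_e_eq hyo
  have hDy := hD.orderTop_map hθ h3 hyo hψ
  rw [hD.map_sub, hx, C_apply, hD.map_single_zero, sub_zero, orderTop_zero] at hDy
  exact WithTop.top_ne_coe hDy

theorem hdone_of_hThree (hD : IsSeriesDerivation H ι D)
    (hθ : ∀ φ, (logDer H D φ).orderTop = θ φ) (h3 : H.HThree θ) : HDone D := by
  ext x
  constructor
  · intro hx
    exact ⟨single 0 (x.coeff 0), x - single 0 (x.coeff 0), hD.map_single_zero _,
      orderTop_sub_single_zero_pos hx, (add_sub_cancel _ _).symm⟩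
  · rintro ⟨c, m, hc, hm, rfl⟩
    obtain ⟨c, rfl⟩ := (hD.map_eq_zero_iff hθ h3).1 hc
    refine (le_min ?_ hm.le).trans min_orderTop_le_orderTop_add
    rw [C_apply]
    exact orderTop_single_le

end IsSeriesDerivation

section Converse

variable {Φ : Type*} [LinearOrder Φ] {Γ : Type*} [AddCommGroup Γ] [LinearOrder Γ]
  [IsOrderedAddMonoid Γ] {k : Type*} [Field k] {H : HahnEmbeddingData Φ Γ}
  {D : HahnSeries Γ k → HahnSeries Γ k} {θ : Φ → Γ}

theorem HDthree.strictMono (h : HDthree D) (hθ : ∀ φ, (logDer H D φ).orderTop = θ φ) :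
    StrictMono θ := by
  intro φ₁ φ₂ h12
  have hord (φ : Φ) : (tmon H k φ).order = H.b φ := order_single one_ne_zero
  have habs : |(tmon H k φ₂).order| < |(tmon H k φ₁).order| := by
    rw [hord, hord, abs_of_pos (H.b_pos _), abs_of_pos (H.b_pos _)]
    exact H.b_lt_b_of_lt h12
  obtain ⟨hle, heq⟩ := h (tmon H k φ₁) (tmon H k φ₂) (single_ne_zero one_ne_zero)
    (single_ne_zero one_ne_zero) habs (by rw [hord, abs_pos]; exact (H.b_pos _).ne')
  change (logDer H D φ₁).orderTop ≤ (logDer H D φ₂).orderTop at hle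
  change (logDer H D φ₁).orderTop = (logDer H D φ₂).orderTop ↔ _ at heq
  rw [hθ, hθ, WithTop.coe_le_coe] at hle
  rw [hθ, hθ, WithTop.coe_inj, hord, hord, H.archEquiv_iff_orderTop_eq, H.orderTop_e_b,
    H.orderTop_e_b, WithTop.coe_inj] at heq
  exact hle.lt_of_ne fun h => h12.ne (heq.1 h)

theorem HDtwo.lt_orderTop_sub {ι : ℝ →+* k} (h : HDtwo D) (hD : IsSeriesDerivation H ι D)
    (hθ : ∀ φ, (logDer H D φ).orderTop = θ φ) (hmono : StrictMono θ) {φ₁ φ₂ : Φ}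
    (h12 : φ₁ < φ₂) : (φ₁ : WithTop Φ) < (H.e (θ φ₁ - θ φ₂)).orderTop := by
  by_contra hcon
  set δ := θ φ₂ - θ φ₁
  have hδ : 0 < δ := sub_pos.2 (hmono h12)
  obtain ⟨ψ, hψ⟩ := H.exists_orderTop_e_eq hδ.ne'
  have hψφ₁ : ψ ≤ φ₁ := by
    rwa [← neg_sub, map_neg, orderTop_neg, hψ, not_lt, WithTop.coe_le_coe] at hcon
  have hbδ : H.b φ₂ < δ := by
    have := H.add_pos_of_orderTop_lt hδ (δ := -H.b φ₂)
      (by rw [map_neg, orderTop_neg, hψ, H.orderTop_e_b]; exact_mod_cast hψφ₁.trans_lt h12)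
    rwa [← sub_eq_add_neg, sub_pos] at this
  have hD2 := (h (single (H.b φ₂) 1) (single δ 1) (single_ne_zero one_ne_zero)
    (single_ne_zero one_ne_zero) (by rw [order_single one_ne_zero]; exact (H.b_pos φ₂).ne')
    (by rw [order_single one_ne_zero]; exact hδ.ne')).1
    (by rw [orderTop_single one_ne_zero, orderTop_single one_ne_zero]; exact_mod_cast hbδ.le)
  rw [hD.orderTop_map_single hθ hmono (H.orderTop_e_b φ₂), hD.orderTop_map_single hθ hmono hψ,
    WithTop.coe_le_coe] at hD2
  have : H.b φ₂ + θ φ₂ ≤ θ φ₂ := calc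
    H.b φ₂ + θ φ₂ ≤ δ + θ ψ := hD2
    _ ≤ δ + θ φ₁ := by gcongr; exact hmono.monotone hψφ₁
    _ = θ φ₂ := sub_add_cancel _ _
  exact (H.b_pos φ₂).not_ge (add_le_iff_nonpos_left.1 this)

end Converse

/-- a series derivation `d` on `k((Γ))` satisfies (HD2) and (HD3) if and only
if condition (H3) holds: for `φ₁ < φ₂` one has `θ_{φ₁} < θ_{φ₂}` and
`v_Γ(θ_{φ₁} − θ_{φ₂}) > φ₁`, where `θ_φ = v(d(t_φ)/t_φ)`.  In that case (HD1) also holds,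
with `ker d = k`, so `d` is a Hardy type derivation. -/
theorem hardy_type_criterion {Φ : Type*} [LinearOrder Φ]
    {Γ : Type*} [AddCommGroup Γ] [LinearOrder Γ] [IsOrderedAddMonoid Γ] {k : Type*} [Field k]
    (H : HahnEmbeddingData Φ Γ) (ι : ℝ →+* k)
    (D : HahnSeries Γ k → HahnSeries Γ k) (hD : IsSeriesDerivation H ι D)
    (θ : Φ → Γ) (hθ : ∀ φ, (logDer H D φ).orderTop = ((θ φ : Γ) : WithTop Γ)) :
    ((HDtwo D ∧ HDthree D) ↔
      (∀ φ₁ φ₂ : Φ, φ₁ < φ₂ → θ φ₁ < θ φ₂ ∧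
        ((φ₁ : Φ) : WithTop Φ) < (H.e (θ φ₁ - θ φ₂)).orderTop)) ∧
    ((∀ φ₁ φ₂ : Φ, φ₁ < φ₂ → θ φ₁ < θ φ₂ ∧
        ((φ₁ : Φ) : WithTop Φ) < (H.e (θ φ₁ - θ φ₂)).orderTop) →
      (HDone D ∧ ∀ x : HahnSeries Γ k, D x = 0 ↔ ∃ c : k, x = HahnSeries.C c)) := by
  have hiff : (HDtwo D ∧ HDthree D) ↔ H.HThree θ := by
    refine ⟨fun ⟨h2, h3⟩ φ₁ φ₂ h12 => ?_,
      fun h3 => ⟨hD.hdtwo_of_hThree hθ h3, hD.hdthree_of_hThree hθ h3⟩⟩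
    have hmono := h3.strictMono hθ
    exact ⟨hmono h12, h2.lt_orderTop_sub hD hθ hmono h12⟩
  exact ⟨hiff, fun h3 => ⟨hD.hdone_of_hThree hθ h3, fun _ => hD.map_eq_zero_iff hθ h3⟩⟩
end

section
/- Let k((Γ)) be endowed with a series derivation of Hardy type d, with Γ a subgroup of the Hahn group Σ_{φ∈Φ} ℝ, and set θ_φ := v(d(t_φ)/t_φ). Then for every b ∈ k((Γ))∖{0} with v(b) ≠ 0 one has v(d(b)/b) = v(d(t^β)/t^β) = θ_φ, where β = v(b) and φ = v_Γ(β); consequently {v(d(b)/b) : b ≠ 0, v(b) ≠ 0} = {θ_φ : φ ∈ Φ}. -/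
/- Common setting: a generalized series field `k((Γ))`, where the totally ordered abelian
group `Γ` is regarded, via Hahn's embedding theorem, as a subgroup of the Hahn group
`Σ_{φ ∈ Φ} ℝ = HahnSeries Φ ℝ`, and the coefficient field `k` contains the real exponents
(via a ring homomorphism `ι : ℝ →+* k`). -/

open HahnSeries

/-! By (HD3) applied to the fundamental monomials `t_φ`, whose exponents `1_φ` are pairwise
not archimedean equivalent, `θ` is strictly increasing. Hence in the strong Leibniz expansion
`d(t^β) = t^β Σ_ψ β_ψ d(t_ψ)/t_ψ` the summand `ψ = φ = v_Γ(β)` alone carries the leading term,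
so `v(d(t^β)/t^β) = θ_φ`. For `b` with `v(b) = β`, l'Hospital's rule (HD2) forces
`v(d b) = v(d(t^β))`, and dividing by `b` resp. `t^β` gives the same value. -/

namespace HahnSeries

section LinearOrder

variable {Γ : Type*} [LinearOrder Γ] {R : Type*} [AddCommMonoid R] {α : Type*}

theorem SummableFamily.hsum_orderTop_of_lt {s : SummableFamily Γ R α} {g : Γ} {a : α}
    (ha : (s a).orderTop = g) (hlt : ∀ b ≠ a, (g : WithTop Γ) < (s b).orderTop) :
    s.hsum.orderTop = g := by
  have hle : ∀ b, (g : WithTop Γ) ≤ (s b).orderTop := fun b => by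
    rcases eq_or_ne b a with rfl | hb
    · exact ha.ge
    · exact (hlt b hb).le
  exact hsum_orderTop_of_le ha.symm
    (fun b _ hg' => WithTop.coe_le_coe.mp ((hle b).trans (orderTop_le_of_coeff_ne_zero hg')))
    (fun b hb => coeff_eq_zero_of_lt_orderTop (hlt b hb))

end LinearOrder

variable {Γ : Type*} [AddCommGroup Γ] [LinearOrder Γ] [IsOrderedAddMonoid Γ] {k : Type*} [Field k]

theorem orderTop_inv (x : HahnSeries Γ k) : x⁻¹.orderTop = -x.orderTop := by
  rcases eq_or_ne x 0 with rfl | hx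
  · simp
  have h : x.order + x⁻¹.order = 0 := by
    rw [← order_mul hx (inv_ne_zero hx), mul_inv_cancel₀ hx, order_one]
  rw [← order_eq_orderTop_of_ne_zero hx, ← order_eq_orderTop_of_ne_zero (inv_ne_zero hx),
    eq_neg_of_add_eq_zero_right h, WithTop.LinearOrderedAddCommGroup.coe_neg]

theorem orderTop_mul_inv (x y : HahnSeries Γ k) :
    (x * y⁻¹).orderTop = x.orderTop - y.orderTop := by
  rw [orderTop_mul, orderTop_inv, sub_eq_add_neg]

end HahnSeries

namespace HahnEmbeddingData

variable {Φ : Type*} [LinearOrder Φ] {Γ : Type*} [AddCommGroup Γ] [LinearOrder Γ]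
  [IsOrderedAddMonoid Γ] (H : HahnEmbeddingData Φ Γ)

theorem nsmul_b_lt_b {φ₁ φ₂ : Φ} (h : φ₁ < φ₂) (n : ℕ) : n • H.b φ₂ < H.b φ₁ := by
  rw [← sub_pos, H.ord]
  refine ⟨φ₁, ?_, fun ψ hψ => ?_⟩
  · simp [H.hb, coeff_single_of_ne h.ne]
  · simp [H.hb, coeff_single_of_ne hψ.ne, coeff_single_of_ne (hψ.trans h).ne]

theorem b_strictAnti : StrictAnti H.b := fun _ _ h => by simpa using H.nsmul_b_lt_b h 1

theorem not_archEquiv_b {φ₁ φ₂ : Φ} (h : φ₁ < φ₂) : ¬ ArchEquiv (H.b φ₁) (H.b φ₂) := by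
  rintro ⟨n, hn, -⟩
  rw [abs_of_pos (H.b_pos φ₁), abs_of_pos (H.b_pos φ₂)] at hn
  exact hn.not_gt (H.nsmul_b_lt_b h n)

end HahnEmbeddingData

section LHospital

variable {Γ : Type*} [AddCommGroup Γ] [LinearOrder Γ] {k : Type*} [Field k]
  {D : HahnSeries Γ k → HahnSeries Γ k}

theorem HDtwo.orderTop_map_eq (hD : HDtwo D) {a b : HahnSeries Γ k} (ha : a ≠ 0) (hb : b ≠ 0)
    (ha₀ : a.order ≠ 0) (hb₀ : b.order ≠ 0) (h : a.orderTop = b.orderTop) :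
    (D a).orderTop = (D b).orderTop :=
  le_antisymm ((hD a b ha hb ha₀ hb₀).mp h.le) ((hD b a hb ha hb₀ ha₀).mp h.ge)

end LHospital

section SeriesDerivation

variable {Φ : Type*} [LinearOrder Φ] {Γ : Type*} [AddCommGroup Γ] [LinearOrder Γ]
  [IsOrderedAddMonoid Γ] {k : Type*} [Field k] {H : HahnEmbeddingData Φ Γ} {ι : ℝ →+* k}
  {D : HahnSeries Γ k → HahnSeries Γ k} {θ : Φ → Γ}

theorem HDthree.strictMono_of_orderTop_logDer (hD : HDthree D)
    (hθ : ∀ φ, (logDer H D φ).orderTop = θ φ) : StrictMono θ := by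
  intro φ₁ φ₂ h
  have habs : |H.b φ₂| < |H.b φ₁| := by
    rw [abs_of_pos (H.b_pos φ₁), abs_of_pos (H.b_pos φ₂)]
    exact H.b_strictAnti h
  obtain ⟨hle, hiff⟩ := hD (tmon H k φ₁) (tmon H k φ₂) (single_ne_zero one_ne_zero)
    (single_ne_zero one_ne_zero) (by simpa [tmon] using habs)
    (by simpa [tmon] using (H.b_pos φ₂).ne')
  have hne : (logDer H D φ₁).orderTop ≠ (logDer H D φ₂).orderTop := by
    rw [logDer, logDer, Ne, hiff]
    simpa [tmon] using H.not_archEquiv_b h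
  change (logDer H D φ₁).orderTop ≤ (logDer H D φ₂).orderTop at hle
  rw [hθ, hθ] at hle hne
  exact WithTop.coe_lt_coe.mp (hle.lt_of_ne hne)

theorem IsSeriesDerivation.orderTop_map_single_s11 (hD : IsSeriesDerivation H ι D)
    (hθ : ∀ φ, (logDer H D φ).orderTop = θ φ) (hmono : StrictMono θ) {β : Γ} {φ : Φ}
    (hβ : (H.e β).orderTop = φ) : (D (single β 1)).orderTop = ↑(θ φ + β) := by
  obtain ⟨s, hs, hDs⟩ := hD.strong_leibniz β
  have hterm : ∀ φ', (H.e β).coeff φ' ≠ 0 → (s φ').orderTop = ↑(β + θ φ') := by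
    intro φ' hc
    rw [hs, ← C_mul_eq_smul, orderTop_mul, orderTop_mul, C_apply,
      orderTop_single (by simpa using hc), orderTop_single one_ne_zero, hθ]
    norm_cast
    rw [zero_add]
  rw [hDs, add_comm]
  refine SummableFamily.hsum_orderTop_of_lt (hterm φ (coeff_orderTop_ne hβ)) fun φ' hne => ?_
  by_cases hc : (H.e β).coeff φ' = 0
  · simp [hs, hc]
  · have hlt : φ < φ' := lt_of_le_of_ne
      (WithTop.coe_le_coe.mp (hβ ▸ orderTop_le_of_coeff_ne_zero hc)) (Ne.symm hne)
    rw [hterm φ' hc, WithTop.coe_lt_coe]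
    exact (add_lt_add_iff_left β).mpr (hmono hlt)

theorem HDtwo.orderTop_logDeriv_eq_single (hD : HDtwo D) {b : HahnSeries Γ k} (hb : b ≠ 0)
    (hb₀ : b.order ≠ 0) :
    (D b * b⁻¹).orderTop =
      (D (single b.order (1 : k)) * (single b.order (1 : k))⁻¹).orderTop := by
  have hv : b.orderTop = (single b.order (1 : k)).orderTop := by
    rw [orderTop_single one_ne_zero, order_eq_orderTop_of_ne_zero hb]
  rw [orderTop_mul_inv, orderTop_mul_inv, hv, hD.orderTop_map_eq hb (single_ne_zero one_ne_zero)
    hb₀ (by rwa [order_single one_ne_zero]) hv]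

theorem IsHardySeriesDerivation.orderTop_logDeriv_single (hD : IsHardySeriesDerivation H ι D)
    (hθ : ∀ φ, (logDer H D φ).orderTop = θ φ) {β : Γ} {φ : Φ}
    (hβ : (H.e β).orderTop = φ) :
    (D (single β (1 : k)) * (single β (1 : k))⁻¹).orderTop = θ φ := by
  rw [orderTop_mul_inv, orderTop_single one_ne_zero,
    hD.1.orderTop_map_single_s11 hθ (hD.2.2.2.strictMono_of_orderTop_logDer hθ) hβ]
  norm_cast
  rw [add_sub_cancel_right]

theorem IsHardySeriesDerivation.orderTop_logDeriv (hD : IsHardySeriesDerivation H ι D)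
    (hθ : ∀ φ, (logDer H D φ).orderTop = θ φ) {b : HahnSeries Γ k} (hb : b ≠ 0)
    (hb₀ : b.order ≠ 0) {φ : Φ} (hφ : (H.e b.order).orderTop = φ) :
    (D b * b⁻¹).orderTop = θ φ :=
  (hD.2.2.1.orderTop_logDeriv_eq_single hb hb₀).trans (hD.orderTop_logDeriv_single hθ hφ)

end SeriesDerivation

/-- for a series derivation of Hardy type on `k((Γ))`, the value of the
logarithmic derivative `v(d(b)/b)` of any `b ≠ 0` with `v(b) ≠ 0` equals
`v(d(t^β)/t^β) = θ_φ`, where `β = v(b)` and `φ = v_Γ(β)`; consequently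
`{v(d(b)/b) : b ≠ 0, v(b) ≠ 0} = {θ_φ : φ ∈ Φ}`. -/
theorem logder_values {Φ : Type*} [LinearOrder Φ]
    {Γ : Type*} [AddCommGroup Γ] [LinearOrder Γ] [IsOrderedAddMonoid Γ] {k : Type*} [Field k]
    (H : HahnEmbeddingData Φ Γ) (ι : ℝ →+* k)
    (D : HahnSeries Γ k → HahnSeries Γ k) (hD : IsHardySeriesDerivation H ι D)
    (θ : Φ → Γ) (hθ : ∀ φ, (logDer H D φ).orderTop = ((θ φ : Γ) : WithTop Γ)) :
    (∀ b : HahnSeries Γ k, b ≠ 0 → b.order ≠ 0 → ∀ φ : Φ,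
      (H.e b.order).orderTop = ((φ : Φ) : WithTop Φ) →
      (D b * b⁻¹).orderTop =
          (D (HahnSeries.single b.order (1 : k)) *
            (HahnSeries.single b.order (1 : k))⁻¹).orderTop ∧
      (D b * b⁻¹).orderTop = ((θ φ : Γ) : WithTop Γ)) ∧
    {g : WithTop Γ | ∃ b : HahnSeries Γ k, b ≠ 0 ∧ b.order ≠ 0 ∧ g = (D b * b⁻¹).orderTop} =
      {g : WithTop Γ | ∃ φ : Φ, g = ((θ φ : Γ) : WithTop Γ)} := by
  refine ⟨fun b hb hb₀ φ hφ => ⟨hD.2.2.1.orderTop_logDeriv_eq_single hb hb₀,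
    hD.orderTop_logDeriv hθ hb hb₀ hφ⟩, Set.ext fun g => ⟨?_, ?_⟩⟩
  · rintro ⟨b, hb, hb₀, rfl⟩
    obtain ⟨φ, hφ⟩ := WithTop.ne_top_iff_exists.mp
      (orderTop_ne_top.mpr ((map_ne_zero_iff H.e H.inj).mpr hb₀))
    exact ⟨φ, hD.orderTop_logDeriv hθ hb hb₀ hφ.symm⟩
  · rintro ⟨φ, rfl⟩
    exact ⟨tmon H k φ, single_ne_zero one_ne_zero,
      by simpa [tmon] using (H.b_pos φ).ne', (hθ φ).symm⟩
end
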